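/- Let {R_k} be a strictly increasing sequence of positive reals with R_k → ∞, and let {V_k} be open subsets of a topological space M with V_k ⊆ V_{k+1}, each V_k homeomorphic (diffeomorphic) to ℝⁿ, and M = ⋃_k V_k. Then M is homeomorphic (diffeomorphic) to ℝⁿ. (Brown's theorem on increasing unions of Euclidean open sets, used in the proof of Theorem 3.1.) -/

import Mathlib

/-!
Choose charts `ψ k : ℝⁿ → V k`. By induction we build open embeddings `e k : ℝⁿ → M` with
`range (e k) ⊆ V k`, such that `e (k + 1) = e k` on the ball of radius `k + 1` and
`e k '' ball 0 (k + 1)` contains the compact set `C k = ⋃ j < k, ψ j '' closedBall 0 k`. The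
inductive step is Brown's engulfing lemma: inside the cell `V (k + 1)` there is a homeomorphism of
`M` fixing `e k '' closedBall 0 (k + 1)` and pushing `C (k + 1)` into `e k '' ball 0 (k + 2)`;
composing `e k` with its inverse gives `e (k + 1)`. The `e k` stabilise on every ball and the
`C k` exhaust `M`, so their limit is a homeomorphism `ℝⁿ ≃ₜ M`.
-/

open Filter Topology Set Metric

theorem exists_seq_of_forall_exists_succ {α : Type*} {P : ℕ → α → Prop} {Q : ℕ → α → α → Prop}
    {a : α} (h₀ : P 0 a) (hstep : ∀ k a, P k a → ∃ b, P (k + 1) b ∧ Q k b a) :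
    ∃ u : ℕ → α, (∀ k, P k (u k)) ∧ ∀ k, Q k (u (k + 1)) (u k) := by
  choose next hnextP hnextQ using hstep
  let v (k : ℕ) : {a // P k a} := Nat.rec ⟨a, h₀⟩ (fun k b ↦ ⟨next k b b.2, hnextP k b b.2⟩) k
  exact ⟨fun k ↦ (v k).1, fun k ↦ (v k).2, fun k ↦ hnextQ k (v k).1 (v k).2⟩

section Exhaustion

variable {X Y : Type*} [TopologicalSpace X] [TopologicalSpace Y]

theorem t2Space_of_directed_iUnion {ι : Type*} {V : ι → Set X} (hV : ∀ i, IsOpen (V i))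
    (hdir : Directed (· ⊆ ·) V) (hunion : ⋃ i, V i = univ) (hT2 : ∀ i, T2Space (V i)) :
    T2Space X := by
  refine ⟨fun x y hxy ↦ ?_⟩
  obtain ⟨i, hxi, hyi⟩ : ∃ i, x ∈ V i ∧ y ∈ V i := by
    obtain ⟨i, hi⟩ := mem_iUnion.1 (hunion ▸ mem_univ x)
    obtain ⟨j, hj⟩ := mem_iUnion.1 (hunion ▸ mem_univ y)
    obtain ⟨k, hik, hjk⟩ := hdir i j
    exact ⟨k, hik hi, hjk hj⟩
  obtain ⟨u, v, hu, hv, hxu, hyv, huv⟩ :=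
    t2_separation (x := (⟨x, hxi⟩ : V i)) (y := ⟨y, hyi⟩) (by simpa using hxy)
  have hval := (hV i).isOpenEmbedding_subtypeVal
  exact ⟨_, _, hval.isOpenMap u hu, hval.isOpenMap v hv, mem_image_of_mem _ hxu,
    mem_image_of_mem _ hyv, (disjoint_image_iff hval.injective).2 huv⟩

theorem nonempty_homeomorph_of_eqOn_succ {e : ℕ → X → Y} (he : ∀ k, IsOpenEmbedding (e k))
    {U : ℕ → Set X} (hU : ∀ k, IsOpen (U k)) (hUmono : Monotone U) (hUcover : ⋃ k, U k = univ)
    (heq : ∀ k, EqOn (e (k + 1)) (e k) (U k)) (hsurj : ⋃ k, e k '' U k = univ) :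
    Nonempty (X ≃ₜ Y) := by
  have hagree {j k : ℕ} (hjk : j ≤ k) : EqOn (e k) (e j) (U j) := by
    induction k, hjk using Nat.le_induction with
    | base => exact eqOn_refl _ _
    | succ k hjk ih => exact ((heq k).mono (hUmono hjk)).trans ih
  choose N hN using fun x ↦ mem_iUnion.1 (hUcover ▸ mem_univ x)
  set F : X → Y := fun x ↦ e (N x) x
  have hF (k : ℕ) : EqOn F (e k) (U k) := fun x hx ↦
    (hagree (le_max_left (N x) k) (hN x)).symm.trans (hagree (le_max_right (N x) k) hx)
  have hFcont : Continuous F := continuous_of_cover_nhds (fun x ↦ ⟨N x, (hU _).mem_nhds (hN x)⟩)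
    fun k ↦ (he k).continuous.continuousOn.congr (hF k)
  have hFopen : IsOpenMap F := fun O hO ↦ by
    rw [← inter_univ O, ← hUcover, inter_iUnion, image_iUnion]
    exact isOpen_iUnion fun k ↦ (hF k).mono inter_subset_right |>.image_eq ▸
      (he k).isOpenMap _ (hO.inter (hU k))
  have hFinj : Function.Injective F := fun x y hxy ↦ by
    have hx := hUmono (le_max_left (N x) (N y)) (hN x)
    have hy := hUmono (le_max_right (N x) (N y)) (hN y)
    exact (he _).injective (by rw [← hF _ hx, ← hF _ hy, hxy])
  have hFsurj : Function.Surjective F := fun y ↦ by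
    obtain ⟨k, x, hx, rfl⟩ := mem_iUnion.1 (hsurj ▸ mem_univ y)
    exact ⟨x, hF k hx⟩
  exact ⟨(Equiv.ofBijective F ⟨hFinj, hFsurj⟩).toHomeomorphOfContinuousOpen hFcont hFopen⟩

end Exhaustion

/-- Piecewise linear, through `(a, a)`, `(s, b)` and `(s + 1, s + 1)`, and the identity outside
`[a, s + 1]`. -/
noncomputable def squeezeProfile (a b s t : ℝ) : ℝ :=
  min (max (a + (b - a) / (s - a) * (t - a)) (b + (s + 1 - b) * (t - s))) t

section squeezeProfile

variable {a b s t : ℝ}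

theorem continuous_squeezeProfile (a b s : ℝ) : Continuous (squeezeProfile a b s) := by
  unfold squeezeProfile; fun_prop

theorem squeezeProfile_strictMono (hab : a < b) (hbs : b ≤ s) :
    StrictMono (squeezeProfile a b s) := by
  have : 0 < (b - a) / (s - a) := div_pos (by linarith) (by linarith)
  intro x y hxy
  exact min_lt_min (max_lt_max (by nlinarith) (by nlinarith)) hxy

theorem squeezeProfile_of_le (hab : a < b) (hbs : b ≤ s) (ht : t ≤ a) :
    squeezeProfile a b s t = t := by
  have : (b - a) / (s - a) ≤ 1 := (div_le_one (by linarith)).2 (by linarith)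
  exact min_eq_right (le_max_of_le_left (by nlinarith))

theorem squeezeProfile_of_ge (hbs : b ≤ s) (ht : s + 1 ≤ t) :
    squeezeProfile a b s t = t :=
  min_eq_right (le_max_of_le_right (by nlinarith))

theorem squeezeProfile_le (hab : a < b) (hbs : b ≤ s) (ht : t ≤ s) :
    squeezeProfile a b s t ≤ b := by
  have hsa : 0 < s - a := by linarith
  have : a + (b - a) / (s - a) * (s - a) = b := by field_simp; ring
  have : 0 < (b - a) / (s - a) := div_pos (by linarith) hsa
  exact (min_le_left _ _).trans (max_le (by nlinarith) (by nlinarith))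

noncomputable def squeezeProfileIso (hab : a < b) (hbs : b ≤ s) : ℝ ≃o ℝ :=
  StrictMono.orderIsoOfSurjective _ (squeezeProfile_strictMono hab hbs) <|
    (continuous_squeezeProfile a b s).surjective
      (tendsto_id.congr' <| (eventually_ge_atTop (s + 1)).mono fun _ ht ↦
        (squeezeProfile_of_ge hbs ht).symm)
      (tendsto_id.congr' <| (eventually_le_atBot a).mono fun _ ht ↦
        (squeezeProfile_of_le hab hbs ht).symm)

end squeezeProfile

section radial

variable {E : Type*} [NormedAddCommGroup E] [NormedSpace ℝ E] {c x : E}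

noncomputable def radialMap (c : E) (g : ℝ → ℝ) (x : E) : E :=
  c + (g ‖x - c‖ / ‖x - c‖) • (x - c)

theorem radialMap_of_apply_eq {g : ℝ → ℝ} (h : g ‖x - c‖ = ‖x - c‖) : radialMap c g x = x := by
  rcases eq_or_ne x c with rfl | hxc
  · simp [radialMap]
  · rw [radialMap, h, div_self (norm_ne_zero_iff.2 (sub_ne_zero.2 hxc)), one_smul,
      add_sub_cancel]

variable (G : ℝ ≃o ℝ)

theorem norm_radialMap_sub (hG : G 0 = 0) (c x : E) : ‖radialMap c G x - c‖ = G ‖x - c‖ := by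
  rcases eq_or_ne x c with rfl | hxc
  · simp [radialMap, hG]
  · have ht : 0 < ‖x - c‖ := norm_pos_iff.2 (sub_ne_zero.2 hxc)
    have hGt : 0 ≤ G ‖x - c‖ := hG ▸ G.monotone ht.le
    rw [radialMap, add_sub_cancel_left, norm_smul, Real.norm_of_nonneg (by positivity),
      div_mul_cancel₀ _ ht.ne']

theorem radialMap_symm_radialMap (hG : G 0 = 0) (c x : E) :
    radialMap c G.symm (radialMap c G x) = x := by
  rcases eq_or_ne x c with rfl | hxc
  · simp [radialMap]
  · have ht : 0 < ‖x - c‖ := norm_pos_iff.2 (sub_ne_zero.2 hxc)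
    have hGt : 0 < G ‖x - c‖ := hG ▸ G.strictMono ht
    rw [radialMap, norm_radialMap_sub G hG, G.symm_apply_apply, radialMap, add_sub_cancel_left,
      smul_smul, div_mul_div_cancel₀ hGt.ne', div_self ht.ne', one_smul, add_sub_cancel]

theorem continuous_radialMap {a : ℝ} (ha : 0 < a) (hG : ∀ t ≤ a, G t = t) :
    Continuous (radialMap c G) := by
  refine continuous_iff_continuousAt.2 fun x ↦ ?_
  rcases eq_or_ne x c with rfl | hxc
  · refine continuousAt_id.congr ?_
    filter_upwards [ball_mem_nhds x ha] with y hy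
    exact (radialMap_of_apply_eq (hG _ (mem_ball_iff_norm.1 hy).le)).symm
  · have : ‖x - c‖ ≠ 0 := norm_ne_zero_iff.2 (sub_ne_zero.2 hxc)
    unfold radialMap
    fun_prop (disch := assumption)

noncomputable def radialHomeomorph (c : E) {a : ℝ} (ha : 0 < a) (hG : ∀ t ≤ a, G t = t) :
    E ≃ₜ E where
  toFun := radialMap c G
  invFun := radialMap c G.symm
  left_inv := radialMap_symm_radialMap G (hG 0 ha.le) c
  right_inv x := by simpa using radialMap_symm_radialMap G.symm (hG' 0 ha.le) c x
  continuous_toFun := continuous_radialMap G ha hG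
  continuous_invFun := continuous_radialMap G.symm ha hG'
where
  hG' (t : ℝ) (ht : t ≤ a) : G.symm t = t := G.symm_apply_eq.2 (hG t ht).symm

theorem exists_homeomorph_squeeze_closedBall (c : E) {a b s : ℝ} (ha : 0 < a) (hab : a < b)
    (hbs : b ≤ s) :
    ∃ S : E ≃ₜ E, EqOn S id (closedBall c a) ∧ MapsTo S (closedBall c s) (closedBall c b) ∧
      EqOn S id (closedBall c (s + 1))ᶜ := by
  set G := squeezeProfileIso hab hbs
  have hG : ∀ t ≤ a, G t = t := fun t ht ↦ squeezeProfile_of_le hab hbs ht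
  refine ⟨radialHomeomorph G c ha hG, fun x hx ↦ ?_, fun x hx ↦ ?_, fun x hx ↦ ?_⟩
  · exact radialMap_of_apply_eq (hG _ (mem_closedBall_iff_norm.1 hx))
  · rw [mem_closedBall_iff_norm] at hx ⊢
    exact (norm_radialMap_sub G (hG 0 ha.le) c x).trans_le (squeezeProfile_le hab hbs hx)
  · exact radialMap_of_apply_eq
      (squeezeProfile_of_ge hbs (not_le.1 (mt mem_closedBall_iff_norm.2 hx)).le)

end radial

namespace Homeomorph

variable {X : Type*} [TopologicalSpace X] {h : X ≃ₜ X} {s : Set X}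

theorem symm_eqOn_id (hs : EqOn h id s) : EqOn h.symm id s :=
  fun _ hx ↦ h.symm_apply_eq.2 (hs hx).symm

theorem mapsTo_of_eqOn_compl (hs : EqOn h id sᶜ) : MapsTo h s s := fun x hx ↦ by
  by_contra hhx
  have : x = h x := by simpa using symm_eqOn_id hs hhx
  exact hhx (this ▸ hx)

end Homeomorph

namespace Topology.IsOpenEmbedding

variable {E M : Type*} [TopologicalSpace E] [TopologicalSpace M] [T2Space M] {f : E → M}
  {D : Set E}

theorem continuous_of_conj (hf : IsOpenEmbedding f) {T : E → E} (hT : Continuous T)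
    (hD : IsCompact D) (hTD : EqOn T id Dᶜ) {g : M → M} (hgf : ∀ y, g (f y) = f (T y))
    (hg : EqOn g id (range f)ᶜ) : Continuous g := by
  have hrange : ContinuousOn g (range f) := by
    rw [← image_univ, hf.isInducing.continuousOn_image_iff, continuousOn_univ]
    simpa only [Function.comp_def, hgf] using hf.continuous.comp hT
  have hcompl : EqOn g id (f '' D)ᶜ := by
    intro x hx
    by_cases hxf : x ∈ range f
    · obtain ⟨y, rfl⟩ := hxf
      rw [hgf, hTD fun hy ↦ hx (mem_image_of_mem f hy)]; rfl
    · exact hg hxf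
  refine continuous_iff_continuousAt.2 fun x ↦ ?_
  by_cases hxf : x ∈ range f
  · exact hrange.continuousAt (hf.isOpen_range.mem_nhds hxf)
  · have hxD : x ∈ (f '' D)ᶜ := fun h ↦ hxf (image_subset_range f D h)
    exact (continuousOn_id.congr hcompl).continuousAt
      ((hD.image hf.continuous).isClosed.isOpen_compl.mem_nhds hxD)

theorem exists_homeomorph_extend (hf : IsOpenEmbedding f) (S : E ≃ₜ E) (hD : IsCompact D)
    (hSD : EqOn S id Dᶜ) :
    ∃ H : M ≃ₜ M, (∀ y, H (f y) = f (S y)) ∧ EqOn H id (range f)ᶜ := by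
  classical
  set ι : E ↪ M := ⟨f, hf.injective⟩
  refine ⟨⟨Equiv.Perm.viaEmbedding S.toEquiv ι,
    hf.continuous_of_conj S.continuous hD hSD (Equiv.Perm.viaEmbedding_apply _ ι)
      (fun x ↦ Equiv.Perm.viaEmbedding_apply_of_notMem _ ι x),
    hf.continuous_of_conj S.symm.continuous hD (Homeomorph.symm_eqOn_id hSD)
      (Equiv.Perm.viaEmbedding_apply S.symm.toEquiv ι)
      (fun x ↦ Equiv.Perm.viaEmbedding_apply_of_notMem S.symm.toEquiv ι x)⟩,
    Equiv.Perm.viaEmbedding_apply _ ι, fun x ↦ Equiv.Perm.viaEmbedding_apply_of_notMem _ ι x⟩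

end Topology.IsOpenEmbedding

namespace Topology.IsOpenEmbedding

variable {E M : Type*} [NormedAddCommGroup E] [NormedSpace ℝ E] [ProperSpace E]
  [TopologicalSpace M] [T2Space M] {f : E → M}

theorem exists_homeomorph_squeeze_image (hf : IsOpenEmbedding f) (c : E) {a b s : ℝ} (ha : 0 < a)
    (hab : a < b) (hbs : b ≤ s) :
    ∃ H : M ≃ₜ M, EqOn H id (f '' closedBall c a) ∧
      MapsTo H (f '' closedBall c s) (f '' closedBall c b) ∧ EqOn H id (range f)ᶜ := by
  obtain ⟨S, hSa, hSs, hSout⟩ := exists_homeomorph_squeeze_closedBall c ha hab hbs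
  obtain ⟨H, hHf, hHout⟩ := hf.exists_homeomorph_extend S (isCompact_closedBall c (s + 1)) hSout
  refine ⟨H, ?_, ?_, hHout⟩
  · rintro _ ⟨y, hy, rfl⟩
    rw [hHf, hSa hy]; rfl
  · rintro _ ⟨y, hy, rfl⟩
    exact hHf y ▸ mem_image_of_mem f (hSs hy)

theorem exists_homeomorph_mapsTo (hf : IsOpenEmbedding f) {K O : Set M} (hK : IsCompact K)
    (hKf : K ⊆ range f) (hO : IsOpen O) (hOne : O.Nonempty) (hOf : O ⊆ range f) :
    ∃ H : M ≃ₜ M, MapsTo H K O ∧ EqOn H id (range f)ᶜ := by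
  obtain ⟨_, hcO⟩ := hOne
  obtain ⟨c, rfl⟩ := hOf hcO
  obtain ⟨ε, hε, hball⟩ := Metric.isOpen_iff.1 (hO.preimage hf.continuous) c hcO
  obtain ⟨r, hr⟩ := (hf.isInducing.isCompact_preimage' hK hKf).isBounded.subset_closedBall c
  obtain ⟨H, -, hHs, hHout⟩ := hf.exists_homeomorph_squeeze_image c (a := ε / 4) (b := ε / 2)
    (by positivity) (by linarith) (le_max_left _ r)
  refine ⟨H, fun x hx ↦ ?_, hHout⟩
  obtain ⟨y, rfl⟩ := hKf hx
  obtain ⟨z, hz, hzy⟩ :=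
    hHs (mem_image_of_mem f (closedBall_subset_closedBall (le_max_right _ _) (hr hx)))
  exact hzy ▸ hball (closedBall_subset_ball (half_lt_self hε) hz)

end Topology.IsOpenEmbedding

section Engulf

variable {E M : Type*} [NormedAddCommGroup E] [NormedSpace ℝ E] [ProperSpace E]
  [TopologicalSpace M] [T2Space M]

/-- Brown's engulfing lemma. A squeeze `α` in the chart `f` moves `K` into a small ball of the
chart `g` that lies in `range f`; a radial squeeze `σ` in the chart `g` fixing that ball pushes
`α '' L` into `range f`, which `α⁻¹` preserves. The homeomorphism is `α⁻¹ ∘ σ ∘ α`. -/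
theorem exists_homeomorph_engulf {f g : E → M} (hf : IsOpenEmbedding f) (hg : IsOpenEmbedding g)
    (hfg : range f ⊆ range g) {K L : Set M} (hK : IsCompact K) (hKf : K ⊆ range f)
    (hL : IsCompact L) (hLg : L ⊆ range g) :
    ∃ h : M ≃ₜ M, EqOn h id K ∧ MapsTo h L (range f) ∧ EqOn h id (range g)ᶜ := by
  obtain ⟨c, hc⟩ := hfg (mem_range_self (0 : E))
  obtain ⟨ε, hε, hball⟩ := Metric.isOpen_iff.1 (hf.isOpen_range.preimage hg.continuous) c
    (show g c ∈ range f from hc ▸ mem_range_self 0)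
  obtain ⟨α, hαK, hαout⟩ := hf.exists_homeomorph_mapsTo hK hKf
    (hf.isOpen_range.inter (hg.isOpenMap _ isOpen_ball))
    ⟨g c, hball (mem_ball_self hε), c, mem_ball_self (half_pos hε), rfl⟩ inter_subset_left
  have hαout' : EqOn α id (range g)ᶜ := hαout.mono (compl_subset_compl.2 hfg)
  have hαL : MapsTo α L (range g) := (Homeomorph.mapsTo_of_eqOn_compl hαout').mono_left hLg
  obtain ⟨r, hr⟩ := (hg.isInducing.isCompact_preimage' (hL.image α.continuous)
    hαL.image_subset).isBounded.subset_closedBall c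
  obtain ⟨σ, hσc, hσs, hσout⟩ := hg.exists_homeomorph_squeeze_image c (a := ε / 2)
    (b := 3 * ε / 4) (by positivity) (by linarith) (le_max_left _ r)
  refine ⟨α.trans (σ.trans α.symm), fun x hx ↦ ?_, fun x hx ↦ ?_, fun x hx ↦ ?_⟩
  · obtain ⟨y, hy, hyx⟩ := (hαK hx).2
    have : σ (α x) = α x := hyx ▸ hσc (mem_image_of_mem g (ball_subset_closedBall hy))
    simp [this]
  · obtain ⟨y, hyx⟩ := hαL hx
    have hy : y ∈ closedBall c (max (3 * ε / 4) r) := closedBall_subset_closedBall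
      (le_max_right _ _) (hr (show g y ∈ α '' L from hyx ▸ mem_image_of_mem α hx))
    obtain ⟨z, hz, hzy⟩ := hσs (mem_image_of_mem g hy)
    have : σ (α x) ∈ range f := hyx ▸ hzy ▸ hball (closedBall_subset_ball (by linarith) hz)
    exact Homeomorph.mapsTo_of_eqOn_compl (Homeomorph.symm_eqOn_id hαout) this
  · have hσx : σ x = x := hσout hx
    simp only [Homeomorph.trans_apply, hαout' hx, id, hσx]
    exact Homeomorph.symm_eqOn_id hαout' hx

theorem exists_isOpenEmbedding_eqOn_engulf {e g : E → M} (he : IsOpenEmbedding e)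
    (hg : IsOpenEmbedding g) (heg : range e ⊆ range g) {C : Set M} (hC : IsCompact C)
    (hCg : C ⊆ range g) {r R : ℝ} (hR : 0 < R) (hrR : r < R) :
    ∃ e' : E → M, IsOpenEmbedding e' ∧ range e' ⊆ range g ∧ EqOn e' e (closedBall 0 r) ∧
      C ⊆ e' '' ball 0 R := by
  obtain ⟨φ, hφ, hφrange⟩ : ∃ φ : E → E, IsOpenEmbedding φ ∧ range φ = ball 0 R := by
    have hsource := OpenPartialHomeomorph.univBall_source (0 : E) R
    refine ⟨_, OpenPartialHomeomorph.isOpenEmbedding _ hsource, ?_⟩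
    rw [← image_univ, ← hsource, OpenPartialHomeomorph.image_source_eq_target,
      OpenPartialHomeomorph.univBall_target _ hR]
  have hfrange : range (e ∘ φ) = e '' ball 0 R := by rw [range_comp, hφrange]
  obtain ⟨h, hK, hC', hout⟩ := exists_homeomorph_engulf (he.comp hφ) hg
    (hfrange ▸ (image_subset_range _ _).trans heg)
    ((isCompact_closedBall 0 r).image he.continuous)
    (hfrange ▸ image_mono (closedBall_subset_ball hrR)) hC hCg
  refine ⟨h.symm ∘ e, h.symm.isOpenEmbedding.comp he, ?_, fun y hy ↦ ?_, fun x hx ↦ ?_⟩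
  · rw [range_comp]
    exact (image_mono heg).trans
      (Homeomorph.mapsTo_of_eqOn_compl (Homeomorph.symm_eqOn_id hout)).image_subset
  · exact Homeomorph.symm_eqOn_id hK (mem_image_of_mem e hy)
  · obtain ⟨y, hy, hyx⟩ := hfrange ▸ hC' hx
    exact ⟨y, hy, by simp [hyx]⟩

end Engulf

theorem iUnion_biUnion_lt_image_closedBall {E M : Type*} [SeminormedAddCommGroup E]
    {ψ : ℕ → E → M} (hψ : ⋃ k, range (ψ k) = univ) :
    ⋃ k, ⋃ j < k, ψ j '' closedBall 0 k = univ := by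
  refine eq_univ_of_forall fun x ↦ ?_
  obtain ⟨j, y, rfl⟩ := mem_iUnion.1 (hψ ▸ mem_univ x)
  refine mem_iUnion.2 ⟨max (j + 1) ⌈‖y‖⌉₊, mem_iUnion₂.2 ⟨j, by omega, y, ?_, rfl⟩⟩
  rw [mem_closedBall_zero_iff]
  exact (Nat.le_ceil _).trans (by exact_mod_cast le_max_right _ _)

theorem nonempty_homeomorph_of_monotone_iUnion {E M : Type*} [NormedAddCommGroup E]
    [NormedSpace ℝ E] [ProperSpace E] [TopologicalSpace M] {V : ℕ → Set M}
    (hV : ∀ k, IsOpen (V k)) (hmono : Monotone V) (hunion : ⋃ k, V k = univ)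
    (hhomeo : ∀ k, Nonempty (V k ≃ₜ E)) :
    Nonempty (M ≃ₜ E) := by
  have : T2Space M := t2Space_of_directed_iUnion hV hmono.directed_le hunion
    fun k ↦ (hhomeo k).some.isEmbedding.t2Space
  obtain ⟨ψ, hψ, hψrange⟩ :
      ∃ ψ : ℕ → E → M, (∀ k, IsOpenEmbedding (ψ k)) ∧ ∀ k, range (ψ k) = V k :=
    ⟨fun k ↦ (↑) ∘ (hhomeo k).some.symm,
      fun k ↦ (hV k).isOpenEmbedding_subtypeVal.comp (hhomeo k).some.symm.isOpenEmbedding,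
      fun k ↦ by rw [range_comp, Homeomorph.range_coe, image_univ, Subtype.range_coe]⟩
  set C : ℕ → Set M := fun k ↦ ⋃ j < k, ψ j '' closedBall 0 k
  have hC (k : ℕ) : IsCompact (C k) := (finite_lt_nat k).isCompact_biUnion fun j _ ↦
    (isCompact_closedBall 0 _).image (hψ j).continuous
  have hCV (k : ℕ) : C k ⊆ V k := iUnion₂_subset fun j hj ↦
    (image_subset_range _ _).trans ((hψrange j).trans_subset (hmono hj.le))
  have hCcover : ⋃ k, C k = univ :=
    iUnion_biUnion_lt_image_closedBall (by simpa only [hψrange] using hunion)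
  set P : ℕ → (E → M) → Prop := fun k e ↦
    IsOpenEmbedding e ∧ range e ⊆ V k ∧ C k ⊆ e '' ball 0 (k + 1)
  have h₀ : P 0 (ψ 0) := ⟨hψ 0, (hψrange 0).subset, by simp [C]⟩
  have hstep (k : ℕ) (e : E → M) (he : P k e) :
      ∃ e', P (k + 1) e' ∧ EqOn e' e (ball 0 (k + 1)) := by
    obtain ⟨he, heV, -⟩ := he
    obtain ⟨e', he', he'V, heq, hCe'⟩ := exists_isOpenEmbedding_eqOn_engulf he (hψ (k + 1))
      (hψrange (k + 1) ▸ heV.trans (hmono k.le_succ)) (hC (k + 1))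
      (hψrange (k + 1) ▸ hCV (k + 1)) (r := k + 1) (by positivity) (lt_add_one _)
    exact ⟨e', ⟨he', hψrange (k + 1) ▸ he'V, by exact_mod_cast hCe'⟩,
      heq.mono ball_subset_closedBall⟩
  obtain ⟨e, hP, heq⟩ := exists_seq_of_forall_exists_succ h₀ hstep
  exact (nonempty_homeomorph_of_eqOn_succ (fun k ↦ (hP k).1) (fun _ ↦ isOpen_ball)
    (fun _ _ hjk ↦ ball_subset_ball (by gcongr)) (iUnion_ball_nat_succ 0) heq
    (eq_univ_of_subset (iUnion_mono fun k ↦ (hP k).2.2) hCcover)).map Homeomorph.symm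

theorem brown_increasing_union_general (n : ℕ) {M : Type*} [TopologicalSpace M]
    (V : ℕ → Set M) (hopen : ∀ k, IsOpen (V k))
    (hmono : ∀ k, V k ⊆ V (k + 1))
    (hunion : (⋃ k, V k) = Set.univ)
    (hhomeo : ∀ k, Nonempty (V k ≃ₜ EuclideanSpace ℝ (Fin n))) :
    Nonempty (M ≃ₜ EuclideanSpace ℝ (Fin n)) :=
  nonempty_homeomorph_of_monotone_iUnion hopen (monotone_nat_of_le_succ hmono) hunion hhomeo

/-- Brown's theorem on increasing unions, as used in the proof of Theorem 3.1:
if `{R_k}` is a strictly increasing sequence of positive reals with `R_k → ∞` and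
`{V_k}` is an increasing sequence of open subsets of `M`, each homeomorphic to `ℝⁿ`,
with `M = ⋃_k V_k`, then `M` is homeomorphic to `ℝⁿ`. -/
theorem brown_increasing_union (n : ℕ) {M : Type*} [TopologicalSpace M]
    (R : ℕ → ℝ) (hRpos : ∀ k, 0 < R k) (hRmono : StrictMono R)
    (hRinf : Tendsto R atTop atTop)
    (V : ℕ → Set M) (hopen : ∀ k, IsOpen (V k))
    (hmono : ∀ k, V k ⊆ V (k + 1))
    (hunion : (⋃ k, V k) = Set.univ)
    (hhomeo : ∀ k, Nonempty (V k ≃ₜ EuclideanSpace ℝ (Fin n))) :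
    Nonempty (M ≃ₜ EuclideanSpace ℝ (Fin n)) :=
  brown_increasing_union_general n V hopen hmono hunion hhomeo
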